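/- arXiv:0903.5375 — 2 statements merged into one kernel-verified Lean document; each statement's English description precedes it below -/
import Mathlib

section
/- Let f be a nonzero Laurent polynomial in N variables over K. If φ ∈ (K∖{0})^N is a zero of f, then the point (val(φ_1),…,val(φ_N)) lies in the hypersurface associated to the tropicalization of f. That is, TV(f) ⊆ V(Tf). -/
/-!
At `γ = val x` the term `φ_α x^α` of `f(x)` has valuation `val φ_α + α·γ`, so `Tf(γ)` is the
least valuation of a term of `f(x)`. These terms sum to zero, and by the ultrametric inequality a
sum with a unique term of least valuation has exactly that valuation, which is finite; hence the
minimum is attained twice.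
-/

open Finset Pointwise

/-- The tropical dot product `α·γ = ∑ i, α i • γ i`. -/
noncomputable def tropDot {Γ : Type*} [AddCommGroup Γ] [LinearOrder Γ] [IsOrderedAddMonoid Γ] {N : ℕ}
    (α : Fin N → ℤ) (γ : Fin N → Γ) : Γ :=
  ∑ i, α i • γ i

/-- The tropicalization of a Laurent polynomial `f` (an element of the group algebra
`K[ℤ^N]`), evaluated at `γ ∈ Γ^N`:  `Tf(γ) = min_{α ∈ E(f)} (val φ_α + α·γ)`,
computed in `Γ ∪ {∞}` (the min over the empty set is `∞`). -/
noncomputable def tropicalize {Γ : Type*} [AddCommGroup Γ] [LinearOrder Γ] [IsOrderedAddMonoid Γ]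
    {K : Type*} [Field K] {N : ℕ} (val : K → WithTop Γ)
    (f : AddMonoidAlgebra K (Fin N → ℤ)) (γ : Fin N → Γ) : WithTop Γ :=
  f.coeff.support.inf fun α => val (f.coeff α) + WithTop.some (tropDot α γ)

/-- `D_γ(Tf)`: the set of exponents of `f` at which the minimum defining `Tf(γ)`
is attained. -/
def tropD {Γ : Type*} [AddCommGroup Γ] [LinearOrder Γ] [IsOrderedAddMonoid Γ] {K : Type*} [Field K] {N : ℕ}
    (val : K → WithTop Γ) (f : AddMonoidAlgebra K (Fin N → ℤ))
    (γ : Fin N → Γ) : Set (Fin N → ℤ) :=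
  {α | α ∈ f.coeff.support ∧ tropicalize val f γ = val (f.coeff α) + WithTop.some (tropDot α γ)}

/-- `V(Tf)`: the hypersurface associated to the tropicalization of `f`,
i.e. the points `γ` where the minimum is attained at least twice. -/
def tropV {Γ : Type*} [AddCommGroup Γ] [LinearOrder Γ] [IsOrderedAddMonoid Γ] {K : Type*} [Field K] {N : ℕ}
    (val : K → WithTop Γ) (f : AddMonoidAlgebra K (Fin N → ℤ)) :
    Set (Fin N → Γ) :=
  {γ | ∃ α β : Fin N → ℤ, α ≠ β ∧ α ∈ tropD val f γ ∧ β ∈ tropD val f γ}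

/-- Evaluation of a Laurent polynomial at a point of the torus `(K∖{0})^N`:
`f(x) = ∑_{α ∈ E(f)} φ_α x^α`. -/
noncomputable def lEval {K : Type*} [Field K] {N : ℕ}
    (f : AddMonoidAlgebra K (Fin N → ℤ)) (x : Fin N → Kˣ) : K :=
  ∑ α ∈ f.coeff.support, f.coeff α * ((∏ i, (x i) ^ (α i) : Kˣ) : K)


namespace AddValuation

section Ring

variable {R Γ₀ : Type*} [Ring R] [LinearOrderedAddCommMonoidWithTop Γ₀] (v : AddValuation R Γ₀)

theorem map_sum_eq_of_lt {ι : Type*} [DecidableEq ι] {s : Finset ι} {f : ι → R} {j : ι}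
    (hj : j ∈ s) (hf : ∀ i ∈ s \ {j}, v (f j) < v (f i)) :
    v (∑ i ∈ s, f i) = v (f j) :=
  Valuation.map_sum_eq_of_lt v hj hf

theorem exists_ne_map_eq_inf_of_sum_eq_zero {ι : Type*} {s : Finset ι} {f : ι → R}
    (hs : s.inf (fun i => v (f i)) ≠ ⊤) (hsum : ∑ i ∈ s, f i = 0) :
    ∃ i ∈ s, ∃ j ∈ s, i ≠ j ∧
      s.inf (fun i => v (f i)) = v (f i) ∧ s.inf (fun i => v (f i)) = v (f j) := by
  classical
  have hne : s.Nonempty := nonempty_iff_ne_empty.2 (by rintro rfl; exact hs inf_empty)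
  obtain ⟨i, hi, hmin⟩ := s.exists_mem_eq_inf hne (fun i => v (f i))
  refine ⟨i, hi, ?_⟩
  by_contra! hunique
  have hlt : ∀ j ∈ s \ {i}, v (f i) < v (f j) := by
    intro j hj
    obtain ⟨hjs, hji⟩ := by simpa using hj
    exact hmin ▸ (inf_le hjs).lt_of_ne fun h => hunique j hjs (Ne.symm hji) hmin h
  have hsum_val := v.map_sum_eq_of_lt hi hlt
  rw [hsum, map_zero] at hsum_val
  exact hs (hmin.trans hsum_val.symm)

end Ring

variable {K Γ : Type*} [Field K]

theorem map_prod {Γ₀ : Type*} [LinearOrderedAddCommMonoidWithTop Γ₀] (v : AddValuation K Γ₀)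
    {ι : Type*} (s : Finset ι) (f : ι → K) :
    v (∏ i ∈ s, f i) = ∑ i ∈ s, v (f i) := by
  classical
  induction s using Finset.induction_on with
  | empty => simp
  | insert a s ha ih => simp [prod_insert ha, sum_insert ha, ih]

variable [AddCommGroup Γ] [LinearOrder Γ] [IsOrderedAddMonoid Γ] (v : AddValuation K (WithTop Γ))

theorem map_units_zpow {u : Kˣ} {c : Γ} (h : v u = c) (n : ℤ) :
    v ((u ^ n : Kˣ) : K) = ↑(n • c) := by
  cases n with
  | ofNat m => simp [h]
  | negSucc m => simp [zpow_negSucc, h, negSucc_zsmul]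

theorem map_monomial_eq_tropDot {N : ℕ} {x : Fin N → Kˣ} {γ : Fin N → Γ}
    (hγ : ∀ i, v (x i : K) = γ i) (α : Fin N → ℤ) :
    v ((∏ i, x i ^ α i : Kˣ) : K) = tropDot α γ := by
  simp only [Units.coe_prod, map_prod, v.map_units_zpow (hγ _), tropDot, WithTop.coe_sum]

end AddValuation

section Tropicalization

variable {K Γ : Type*} [Field K] [AddCommGroup Γ] [LinearOrder Γ] [IsOrderedAddMonoid Γ]
  (v : AddValuation K (WithTop Γ)) {N : ℕ}

theorem tropicalize_ne_top {f : AddMonoidAlgebra K (Fin N → ℤ)} (hf : f ≠ 0) (γ : Fin N → Γ) :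
    tropicalize v f γ ≠ ⊤ := by
  obtain ⟨α, hα⟩ := Finsupp.support_nonempty_iff.2 (mt AddMonoidAlgebra.coeff_eq_zero.1 hf)
  refine ne_top_of_le_ne_top ?_ (inf_le hα)
  exact WithTop.add_ne_top.2 ⟨v.ne_top_iff.2 (Finsupp.mem_support_iff.1 hα), WithTop.coe_ne_top⟩

theorem tropicalize_eq_inf_map_term (f : AddMonoidAlgebra K (Fin N → ℤ)) {x : Fin N → Kˣ}
    {γ : Fin N → Γ} (hγ : ∀ i, v (x i : K) = γ i) :
    tropicalize v f γ =
      f.coeff.support.inf fun α => v (f.coeff α * ((∏ i, x i ^ α i : Kˣ) : K)) := by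
  simp only [tropicalize, AddValuation.map_mul, v.map_monomial_eq_tropDot hγ]

end Tropicalization

/-- The value of a zero of `f` lies in the hypersurface associated to the
tropicalization of `f`; that is, `TV(f) ⊆ V(Tf)`. -/
theorem value_of_zero_mem_tropV {Γ : Type*} [AddCommGroup Γ] [LinearOrder Γ] [IsOrderedAddMonoid Γ]
    {K : Type*} [Field K] {N : ℕ}
    (val : K → WithTop Γ)
    (hval0 : ∀ x : K, val x = ⊤ ↔ x = 0)
    (hvalmul : ∀ x y : K, val (x * y) = val x + val y)
    (hvaladd : ∀ x y : K, min (val x) (val y) ≤ val (x + y))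
    (f : AddMonoidAlgebra K (Fin N → ℤ)) (hf : f ≠ 0)
    (x : Fin N → Kˣ) (hx : lEval f x = 0)
    (γ : Fin N → Γ) (hγ : ∀ i, val (x i : K) = WithTop.some (γ i)) :
    γ ∈ tropV val f := by
  have hval1 : val 1 = 0 :=
    WithTop.add_left_cancel ((hval0 1).not.2 one_ne_zero) (by rw [← hvalmul, mul_one, add_zero])
  obtain ⟨v, rfl⟩ : ∃ v : AddValuation K (WithTop Γ), ⇑v = val :=
    ⟨AddValuation.of val ((hval0 0).2 rfl) hval1 hvaladd hvalmul, rfl⟩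
  have htrop := tropicalize_eq_inf_map_term v f hγ
  obtain ⟨α, hα, β, hβ, hne, hαmin, hβmin⟩ :=
    v.exists_ne_map_eq_inf_of_sum_eq_zero (htrop ▸ tropicalize_ne_top v hf γ) hx
  refine ⟨α, β, hne, ⟨hα, ?_⟩, ⟨hβ, ?_⟩⟩
  · rw [htrop, hαmin, v.map_mul, v.map_monomial_eq_tropDot hγ]
  · rw [htrop, hβmin, v.map_mul, v.map_monomial_eq_tropDot hγ]
end

section
/- Let f, g be nonzero Laurent polynomials in N variables over the valued field K, let γ ∈ Γ^N, and let ω ∈ ℝ^N be a vector whose coordinates are linearly independent over ℚ. Choose α₀ ∈ D_γ(Tf) with ω·α₀ = min{ω·α : α ∈ D_γ(Tf)} and β₀ ∈ D_γ(Tg) with ω·β₀ = min{ω·β : β ∈ D_γ(Tg)}, and set η₀ := α₀ + β₀. Then η₀ ∈ D_γ(T(fg)) and ω·η₀ = min{ω·η : η ∈ D_γ(T(fg))}. -/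
/-! Expand `(f * g)_η = ∑_{α + β = η} φ_α ψ_β`. After adding `η·γ`, each term has valuation at least
`Tf(γ) + Tg(γ)`, with equality exactly when `α ∈ D_γ(Tf)` and `β ∈ D_γ(Tg)`. Since `α ↦ ω·α` is
injective on `ℤ^N` and `α₀, β₀` are `ω`-minimal, `(α₀, β₀)` is the only such pair summing to
`α₀ + β₀`; so that coefficient has a single dominant term, which gives `T(fg) = Tf + Tg` and
`α₀ + β₀ ∈ D_γ(T(fg))`. Conversely, the ultrametric inequality forces every `η ∈ D_γ(T(fg))` to be
a sum `α + β` of such exponents, whence `ω·η ≥ ω·α₀ + ω·β₀`. -/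

open Finset Pointwise

namespace AddValuation

variable {R Γ₀ : Type*} [Ring R] [LinearOrderedAddCommMonoidWithTop Γ₀] (v : AddValuation R Γ₀)
  {ι : Type*} {s : Finset ι} {F : ι → R} {c d : Γ₀}

theorem le_map_sum_add (h : ∀ i ∈ s, c ≤ v (F i) + d) : c ≤ v (∑ i ∈ s, F i) + d :=
  Finset.sum_induction F (fun x => c ≤ v x + d)
    (fun x y hx hy => (le_min hx hy).trans <| by
      rw [min_add_add_right]; exact add_le_add_left (v.map_add x y) d)
    (by simp) h

theorem lt_map_sum_add (hc : c ≠ ⊤) (h : ∀ i ∈ s, c < v (F i) + d) :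
    c < v (∑ i ∈ s, F i) + d :=
  Finset.sum_induction F (fun x => c < v x + d)
    (fun x y hx hy => (lt_min hx hy).trans_le <| by
      rw [min_add_add_right]; exact add_le_add_left (v.map_add x y) d)
    (by simpa using hc.lt_top) h

end AddValuation

theorem AddMonoidAlgebra.coeff_mul_eq_sum_filter {R M : Type*} [Semiring R] [AddMonoid M]
    [DecidableEq M] (f g : AddMonoidAlgebra R M) (m : M) :
    (f * g).coeff m = ∑ p ∈ f.coeff.support ×ˢ g.coeff.support with p.1 + p.2 = m,
      f.coeff p.1 * g.coeff p.2 := by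
  rw [AddMonoidAlgebra.coeff_mul, Finset.sum_filter, Finset.sum_product]
  rfl

section Tropical

variable {Γ : Type*} [AddCommGroup Γ] [LinearOrder Γ] [IsOrderedAddMonoid Γ]
  {K : Type*} [Field K] {N : ℕ} (v : AddValuation K (WithTop Γ))
  {f g : AddMonoidAlgebra K (Fin N → ℤ)} {γ : Fin N → Γ}

theorem tropDot_add (α β : Fin N → ℤ) :
    tropDot (α + β) γ = tropDot α γ + tropDot β γ := by
  simp [tropDot, add_smul, Finset.sum_add_distrib]

theorem tropicalize_le {α : Fin N → ℤ} (hα : α ∈ f.coeff.support) :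
    tropicalize v f γ ≤ v (f.coeff α) + tropDot α γ :=
  Finset.inf_le hα

theorem tropicalize_lt_of_notMem_tropD {α : Fin N → ℤ} (hα : α ∈ f.coeff.support)
    (hD : α ∉ tropD v f γ) : tropicalize v f γ < v (f.coeff α) + tropDot α γ :=
  (tropicalize_le v hα).lt_of_ne fun h => hD ⟨hα, h⟩

theorem tropicalize_ne_top_of_mem_tropD {α : Fin N → ℤ} (hα : α ∈ tropD v f γ) :
    tropicalize v f γ ≠ ⊤ := by
  rw [hα.2]
  exact WithTop.add_ne_top.2 ⟨v.ne_top_iff.2 (Finsupp.mem_support_iff.1 hα.1), WithTop.coe_ne_top⟩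

theorem tropicalize_add_tropicalize_ne_top {α β : Fin N → ℤ} (hα : α ∈ tropD v f γ)
    (hβ : β ∈ tropD v g γ) : tropicalize v f γ + tropicalize v g γ ≠ ⊤ :=
  WithTop.add_ne_top.2 ⟨tropicalize_ne_top_of_mem_tropD v hα, tropicalize_ne_top_of_mem_tropD v hβ⟩

theorem map_coeff_mul_coeff_add_tropDot {α β η : Fin N → ℤ} (h : α + β = η) :
    v (f.coeff α * g.coeff β) + tropDot η γ =
      (v (f.coeff α) + tropDot α γ) + (v (g.coeff β) + tropDot β γ) := by
  rw [v.map_mul, ← h, tropDot_add, WithTop.coe_add, add_add_add_comm]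

theorem tropicalize_add_le_map_coeff_mul_coeff {α β η : Fin N → ℤ} (hα : α ∈ f.coeff.support)
    (hβ : β ∈ g.coeff.support) (h : α + β = η) :
    tropicalize v f γ + tropicalize v g γ ≤ v (f.coeff α * g.coeff β) + tropDot η γ := by
  rw [map_coeff_mul_coeff_add_tropDot v h]
  exact add_le_add (tropicalize_le v hα) (tropicalize_le v hβ)

theorem tropicalize_add_lt_map_coeff_mul_coeff {α β η : Fin N → ℤ}
    (hT : tropicalize v f γ + tropicalize v g γ ≠ ⊤) (hα : α ∈ f.coeff.support)
    (hβ : β ∈ g.coeff.support) (h : α + β = η) (hD : ¬(α ∈ tropD v f γ ∧ β ∈ tropD v g γ)) :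
    tropicalize v f γ + tropicalize v g γ < v (f.coeff α * g.coeff β) + tropDot η γ := by
  obtain ⟨hTf, hTg⟩ := WithTop.add_ne_top.1 hT
  rw [map_coeff_mul_coeff_add_tropDot v h]
  rcases not_and_or.1 hD with hDα | hDβ
  · exact WithTop.add_lt_add_of_lt_of_le hTg (tropicalize_lt_of_notMem_tropD v hα hDα)
      (tropicalize_le v hβ)
  · exact WithTop.add_lt_add_of_le_of_lt hTf (tropicalize_le v hα)
      (tropicalize_lt_of_notMem_tropD v hβ hDβ)

theorem tropicalize_add_le_map_coeff_mul (η : Fin N → ℤ) :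
    tropicalize v f γ + tropicalize v g γ ≤ v ((f * g).coeff η) + tropDot η γ := by
  classical
  rw [AddMonoidAlgebra.coeff_mul_eq_sum_filter]
  refine v.le_map_sum_add fun p hp => ?_
  obtain ⟨hp, hη⟩ := Finset.mem_filter.1 hp
  obtain ⟨hp₁, hp₂⟩ := Finset.mem_product.1 hp
  exact tropicalize_add_le_map_coeff_mul_coeff v hp₁ hp₂ hη

theorem tropicalize_add_le_tropicalize_mul :
    tropicalize v f γ + tropicalize v g γ ≤ tropicalize v (f * g) γ :=
  Finset.le_inf fun η _ => tropicalize_add_le_map_coeff_mul v η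

/-- Otherwise every product of coefficients contributing to `(f * g).coeff η` would lie strictly
above `Tf + Tg`, hence so would their sum. -/
theorem exists_add_eq_of_mem_tropD_mul {η : Fin N → ℤ}
    (hT : tropicalize v (f * g) γ = tropicalize v f γ + tropicalize v g γ)
    (hη : η ∈ tropD v (f * g) γ) :
    ∃ α ∈ tropD v f γ, ∃ β ∈ tropD v g γ, α + β = η := by
  classical
  by_contra! hD
  have hTne : tropicalize v f γ + tropicalize v g γ ≠ ⊤ :=
    hT ▸ tropicalize_ne_top_of_mem_tropD v hη
  have hlt : tropicalize v f γ + tropicalize v g γ < v ((f * g).coeff η) + tropDot η γ := by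
    rw [AddMonoidAlgebra.coeff_mul_eq_sum_filter]
    refine v.lt_map_sum_add hTne fun p hp => ?_
    obtain ⟨hp, hpη⟩ := Finset.mem_filter.1 hp
    obtain ⟨hp₁, hp₂⟩ := Finset.mem_product.1 hp
    exact tropicalize_add_lt_map_coeff_mul_coeff v hTne hp₁ hp₂ hpη
      fun ⟨h₁, h₂⟩ => hD p.1 h₁ p.2 h₂ hpη
  exact hlt.ne (hT ▸ hη.2)

variable {α₀ β₀ : Fin N → ℤ}

theorem map_coeff_mul_add_tropDot_of_unique (hα₀ : α₀ ∈ tropD v f γ) (hβ₀ : β₀ ∈ tropD v g γ)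
    (huniq : ∀ α ∈ tropD v f γ, ∀ β ∈ tropD v g γ, α + β = α₀ + β₀ → α = α₀ ∧ β = β₀) :
    v ((f * g).coeff (α₀ + β₀)) + tropDot (α₀ + β₀) γ =
      tropicalize v f γ + tropicalize v g γ := by
  classical
  have hTne := tropicalize_add_tropicalize_ne_top v hα₀ hβ₀
  have hmem : (α₀, β₀) ∈ {p ∈ f.coeff.support ×ˢ g.coeff.support | p.1 + p.2 = α₀ + β₀} :=
    Finset.mem_filter.2 ⟨Finset.mem_product.2 ⟨hα₀.1, hβ₀.1⟩, rfl⟩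
  have hmain : v (f.coeff α₀ * g.coeff β₀) + tropDot (α₀ + β₀) γ =
      tropicalize v f γ + tropicalize v g γ := by
    rw [map_coeff_mul_coeff_add_tropDot v rfl, ← hα₀.2, ← hβ₀.2]
  rw [AddMonoidAlgebra.coeff_mul_eq_sum_filter, ← Finset.add_sum_erase _ _ hmem]
  have hrest : tropicalize v f γ + tropicalize v g γ <
      v (∑ p ∈ {p ∈ f.coeff.support ×ˢ g.coeff.support | p.1 + p.2 = α₀ + β₀}.erase (α₀, β₀),
        f.coeff p.1 * g.coeff p.2) + tropDot (α₀ + β₀) γ := by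
    refine v.lt_map_sum_add hTne fun p hp => ?_
    obtain ⟨hpne, hp⟩ := Finset.mem_erase.1 hp
    obtain ⟨hp, hpη⟩ := Finset.mem_filter.1 hp
    obtain ⟨hp₁, hp₂⟩ := Finset.mem_product.1 hp
    exact tropicalize_add_lt_map_coeff_mul_coeff v hTne hp₁ hp₂ hpη
      fun ⟨h₁, h₂⟩ => hpne (Prod.ext_iff.2 (huniq p.1 h₁ p.2 h₂ hpη))
  rw [← hmain, WithTop.add_lt_add_iff_right WithTop.coe_ne_top] at hrest
  rw [v.map_add_eq_of_lt_left hrest, hmain]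

theorem add_mem_tropD_mul_of_unique (hα₀ : α₀ ∈ tropD v f γ) (hβ₀ : β₀ ∈ tropD v g γ)
    (huniq : ∀ α ∈ tropD v f γ, ∀ β ∈ tropD v g γ, α + β = α₀ + β₀ → α = α₀ ∧ β = β₀) :
    α₀ + β₀ ∈ tropD v (f * g) γ := by
  have heq := map_coeff_mul_add_tropDot_of_unique v hα₀ hβ₀ huniq
  have hsupp : α₀ + β₀ ∈ (f * g).coeff.support := by
    rw [Finsupp.mem_support_iff, ← v.ne_top_iff]
    exact (WithTop.add_ne_top.1 (heq ▸ tropicalize_add_tropicalize_ne_top v hα₀ hβ₀)).1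
  exact ⟨hsupp, le_antisymm (tropicalize_le v hsupp) (heq ▸ tropicalize_add_le_tropicalize_mul v)⟩

theorem tropicalize_mul_of_unique (hα₀ : α₀ ∈ tropD v f γ) (hβ₀ : β₀ ∈ tropD v g γ)
    (huniq : ∀ α ∈ tropD v f γ, ∀ β ∈ tropD v g γ, α + β = α₀ + β₀ → α = α₀ ∧ β = β₀) :
    tropicalize v (f * g) γ = tropicalize v f γ + tropicalize v g γ :=
  (add_mem_tropD_mul_of_unique v hα₀ hβ₀ huniq).2.trans
    (map_coeff_mul_add_tropDot_of_unique v hα₀ hβ₀ huniq)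

end Tropical

section RealDot

variable {N : ℕ} {ω : Fin N → ℝ}

theorem sum_intCast_add_mul (α β : Fin N → ℤ) :
    ∑ i, ((α + β) i : ℝ) * ω i = ∑ i, (α i : ℝ) * ω i + ∑ i, (β i : ℝ) * ω i := by
  simp [add_mul, Finset.sum_add_distrib]

theorem sum_intCast_mul_injective (hω : LinearIndependent ℚ ω) :
    Function.Injective fun α : Fin N → ℤ => ∑ i, (α i : ℝ) * ω i := by
  intro α β h
  apply (hω.restrict_scalars' ℤ).fintypeLinearCombination_injective
  simpa [Fintype.linearCombination_apply, zsmul_eq_mul] using h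

theorem eq_and_eq_of_add_eq_of_sum_intCast_mul_le (hω : LinearIndependent ℚ ω)
    {α β α₀ β₀ : Fin N → ℤ} (h : α + β = α₀ + β₀)
    (hα : ∑ i, (α₀ i : ℝ) * ω i ≤ ∑ i, (α i : ℝ) * ω i)
    (hβ : ∑ i, (β₀ i : ℝ) * ω i ≤ ∑ i, (β i : ℝ) * ω i) : α = α₀ ∧ β = β₀ := by
  have hsum := congrArg (fun η : Fin N → ℤ => ∑ i, (η i : ℝ) * ω i) h
  simp only [sum_intCast_add_mul] at hsum
  exact ⟨sum_intCast_mul_injective hω (by linarith), sum_intCast_mul_injective hω (by linarith)⟩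

end RealDot

theorem omega_minimal_sum_mem_tropD_mul_general {Γ : Type*} [AddCommGroup Γ] [LinearOrder Γ] [IsOrderedAddMonoid Γ]
    {K : Type*} [Field K] {N : ℕ}
    (val : K → WithTop Γ)
    (hval0 : ∀ x : K, val x = ⊤ ↔ x = 0)
    (hvalmul : ∀ x y : K, val (x * y) = val x + val y)
    (hvaladd : ∀ x y : K, min (val x) (val y) ≤ val (x + y))
    (f g : AddMonoidAlgebra K (Fin N → ℤ))
    (γ : Fin N → Γ)
    (ω : Fin N → ℝ) (hω : LinearIndependent ℚ ω)
    (α₀ β₀ : Fin N → ℤ)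
    (hα₀ : α₀ ∈ tropD val f γ)
    (hα₀min : ∀ α ∈ tropD val f γ, ∑ i, (α₀ i : ℝ) * ω i ≤ ∑ i, (α i : ℝ) * ω i)
    (hβ₀ : β₀ ∈ tropD val g γ)
    (hβ₀min : ∀ β ∈ tropD val g γ, ∑ i, (β₀ i : ℝ) * ω i ≤ ∑ i, (β i : ℝ) * ω i) :
    α₀ + β₀ ∈ tropD val (f * g) γ ∧
      ∀ η ∈ tropD val (f * g) γ,
        ∑ i, ((α₀ + β₀) i : ℝ) * ω i ≤ ∑ i, (η i : ℝ) * ω i := by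
  have hval1 : val 1 = 0 := by
    have hne : val 1 ≠ ⊤ := fun h => one_ne_zero ((hval0 1).1 h)
    exact (add_right_inj_of_ne_top hne).1 (by rw [← hvalmul, one_mul, add_zero])
  obtain ⟨v, rfl⟩ : ∃ v : AddValuation K (WithTop Γ), ⇑v = val :=
    ⟨AddValuation.of val ((hval0 0).2 rfl) hval1 hvaladd hvalmul, rfl⟩
  have huniq : ∀ α ∈ tropD v f γ, ∀ β ∈ tropD v g γ, α + β = α₀ + β₀ → α = α₀ ∧ β = β₀ :=
    fun α hα β hβ h => eq_and_eq_of_add_eq_of_sum_intCast_mul_le hω h (hα₀min α hα) (hβ₀min β hβ)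
  refine ⟨add_mem_tropD_mul_of_unique v hα₀ hβ₀ huniq, fun η hη => ?_⟩
  obtain ⟨α, hα, β, hβ, rfl⟩ :=
    exists_add_eq_of_mem_tropD_mul v (tropicalize_mul_of_unique v hα₀ hβ₀ huniq) hη
  rw [sum_intCast_add_mul, sum_intCast_add_mul]
  exact add_le_add (hα₀min α hα) (hβ₀min β hβ)

/-- Given `ω ∈ ℝ^N` with rationally independent coordinates, the sum `η₀ = α₀ + β₀` of
the `ω`-minimal exponents `α₀ ∈ D_γ(Tf)` and `β₀ ∈ D_γ(Tg)` belongs to `D_γ(T(fg))`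
and is the `ω`-minimal exponent there. -/
theorem omega_minimal_sum_mem_tropD_mul {Γ : Type*} [AddCommGroup Γ] [LinearOrder Γ] [IsOrderedAddMonoid Γ]
    {K : Type*} [Field K] {N : ℕ}
    (val : K → WithTop Γ)
    (hval0 : ∀ x : K, val x = ⊤ ↔ x = 0)
    (hvalmul : ∀ x y : K, val (x * y) = val x + val y)
    (hvaladd : ∀ x y : K, min (val x) (val y) ≤ val (x + y))
    (f g : AddMonoidAlgebra K (Fin N → ℤ)) (hf : f ≠ 0) (hg : g ≠ 0)
    (γ : Fin N → Γ)
    (ω : Fin N → ℝ) (hω : LinearIndependent ℚ ω)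
    (α₀ β₀ : Fin N → ℤ)
    (hα₀ : α₀ ∈ tropD val f γ)
    (hα₀min : ∀ α ∈ tropD val f γ, ∑ i, (α₀ i : ℝ) * ω i ≤ ∑ i, (α i : ℝ) * ω i)
    (hβ₀ : β₀ ∈ tropD val g γ)
    (hβ₀min : ∀ β ∈ tropD val g γ, ∑ i, (β₀ i : ℝ) * ω i ≤ ∑ i, (β i : ℝ) * ω i) :
    α₀ + β₀ ∈ tropD val (f * g) γ ∧
      ∀ η ∈ tropD val (f * g) γ,
        ∑ i, ((α₀ + β₀) i : ℝ) * ω i ≤ ∑ i, (η i : ℝ) * ω i :=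
  omega_minimal_sum_mem_tropD_mul_general val hval0 hvalmul hvaladd f g γ ω hω α₀ β₀ hα₀ hα₀min hβ₀
    hβ₀min
end
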